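/- Let x₁,…,x_k be positive integers, not all equal. Then there exists a real constant C > 1 such that ω(x₁^n + ⋯ + x_k^n) > slog_C(n) for infinitely many positive integers n. -/

import Mathlib

/-!
Dividing by the gcd, assume `gcd yᵢ = 1` and put `S n = ∑ yᵢ ^ n`, `E = S 1 ≥ 2`. We grow
progressions `a + qℕ` along which every prime of a set `F` divides `S`. From such a progression
jump to `a' = a + φ (S a · ∏ F) · q`: by Euler's theorem `S a' ≡ S a` modulo
`p ^ (v_p (S a) + 1)` for each `p ∈ F`, so these valuations do not grow, and since `S a' > S a`
a new prime `p'` divides `S a'`; passing to the step `q · (p' - 1)` keeps it dividing `S` along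
the progression.

Euler's theorem needs the exponent to exceed the valuation at the primes dividing some `yᵢ`.
This holds throughout because `a` and `q` start as multiples of `φ ((∏ yᵢ) ^ k)`: along such
exponents `S n ≡ #{i | p ∤ yᵢ} (mod p ^ k)`, a residue in `(0, p ^ k)`.

The weight `q · ∏ F · E ^ a` grows at most like `Φ ↦ (E ^ 7) ^ Φ` per step, so after `L`
steps `a` lies below a tower of height `L` while `S a` has at least `L` prime factors.
-/

/-- Tetration: `tower C 0 = 1`, `tower C (l+1) = C ^ (tower C l)` (real
exponentiation). -/
noncomputable def tower (C : ℝ) : ℕ → ℝ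
  | 0 => 1
  | l + 1 => C ^ tower C l

open Finset
open scoped Nat

lemma Nat.factorization_le_of_modEq {m n p : ℕ} (hp : p.Prime) (hm : m ≠ 0)
    (h : n ≡ m [MOD p ^ (m.factorization p + 1)]) : n.factorization p ≤ m.factorization p := by
  by_contra! hlt
  have hdvd : p ^ (m.factorization p + 1) ∣ n := (pow_dvd_pow p hlt).trans (Nat.ordProj_dvd n p)
  exact Nat.pow_succ_factorization_not_dvd hm hp ((h.dvd_iff dvd_rfl).mp hdvd)

lemma Nat.exists_mem_primeFactors_notMem_of_lt {m n : ℕ} (hm : m ≠ 0) (hmn : m < n)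
    {F : Finset ℕ} (hF : ∀ p ∈ F, n.factorization p ≤ m.factorization p) :
    ∃ p ∈ n.primeFactors, p ∉ F := by
  by_contra! h
  have hle : n.factorization ≤ m.factorization := Finsupp.le_def.mpr fun p => by
    by_cases hp : p ∈ n.primeFactors
    · exact hF p (h p hp)
    · rw [← Nat.support_factorization, Finsupp.notMem_support_iff] at hp
      rw [hp]
      exact Nat.zero_le _
  have hdvd : n ∣ m := (Nat.factorization_le_iff_dvd (by omega) hm).mp hle
  exact absurd (Nat.le_of_dvd (Nat.pos_of_ne_zero hm) hdvd) (by omega)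

lemma pow_add_modEq_pow {p J a d b : ℕ} (hp : p.Prime) (hd : φ (p ^ J) ∣ d)
    (ha : p ∣ b → J ≤ a) : b ^ (a + d) ≡ b ^ a [MOD p ^ J] := by
  by_cases hpb : p ∣ b
  · have hdvd : p ^ J ∣ b ^ a := (pow_dvd_pow_of_dvd hpb J).trans (pow_dvd_pow b (ha hpb))
    exact (Nat.modEq_zero_iff_dvd.mpr (hdvd.trans (pow_dvd_pow b (Nat.le_add_right a d)))).trans
      (Nat.modEq_zero_iff_dvd.mpr hdvd).symm
  · obtain ⟨c, rfl⟩ := hd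
    have hcop : b.Coprime (p ^ J) :=
      Nat.Coprime.pow_right J (Nat.coprime_comm.mp ((hp.coprime_iff_not_dvd).mpr hpb))
    calc b ^ (a + φ (p ^ J) * c) = b ^ a * (b ^ φ (p ^ J)) ^ c := by rw [pow_add, pow_mul]
      _ ≡ b ^ a * 1 ^ c [MOD p ^ J] := ((Nat.ModEq.pow_totient hcop).pow c).mul_left _
      _ = b ^ a := by rw [one_pow, mul_one]

lemma pow_modEq_ite {p J n b : ℕ} (hp : p.Prime) (hJ : J ≤ n) (hd : φ (p ^ J) ∣ n) :
    b ^ n ≡ if p ∣ b then 0 else 1 [MOD p ^ J] := by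
  split_ifs with hpb
  · exact Nat.modEq_zero_iff_dvd.mpr ((pow_dvd_pow_of_dvd hpb J).trans (pow_dvd_pow b hJ))
  · simpa using pow_add_modEq_pow (a := 0) hp hd fun h => absurd h hpb

lemma mul_pow_le_pow_pow {E a q P a' p : ℕ} (hE : 2 ≤ E) (hq : 0 < q) (hP : 0 < P)
    (ha' : a' ≤ a + q * E ^ a * P) (hp : p ≤ E ^ a') :
    q * p * (p * P) * E ^ a' ≤ (E ^ 7) ^ (q * P * E ^ a) := by
  set Φ := q * P * E ^ a
  have hqP : q * P ≤ Φ := Nat.le_mul_of_pos_right _ (by positivity)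
  have hEa : E ^ a ≤ Φ := Nat.le_mul_of_pos_left _ (Nat.mul_pos hq hP)
  have ha : a < E ^ a := Nat.lt_pow_self hE
  have ha'Φ : 3 * a' ≤ 6 * Φ := by
    have : q * E ^ a * P = Φ := by ring
    omega
  calc q * p * (p * P) * E ^ a' ≤ q * E ^ a' * (E ^ a' * P) * E ^ a' := by gcongr
    _ = q * P * E ^ (3 * a') := by ring
    _ ≤ Φ * E ^ (6 * Φ) := by gcongr; omega
    _ ≤ E ^ Φ * E ^ (6 * Φ) := by gcongr; exact (Nat.lt_pow_self hE).le
    _ = (E ^ 7) ^ Φ := by ring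

lemma iterate_pow_lt_iterate_pow {B : ℕ} (hB : 2 ≤ B) (b L : ℕ) :
    (B ^ ·)^[L + 1] b < ((B ^ (b + 1)) ^ ·)^[L + 1] 1 := by
  induction L with
  | zero => simpa using Nat.pow_lt_pow_right hB (Nat.lt_succ_self b)
  | succ L ih =>
    rw [Function.iterate_succ_apply' _ (L + 1), Function.iterate_succ_apply' _ (L + 1)]
    calc B ^ (B ^ ·)^[L + 1] b < B ^ ((B ^ (b + 1)) ^ ·)^[L + 1] 1 := Nat.pow_lt_pow_right hB ih
      _ ≤ (B ^ (b + 1)) ^ ((B ^ (b + 1)) ^ ·)^[L + 1] 1 :=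
        Nat.pow_le_pow_left (Nat.le_self_pow (Nat.succ_ne_zero b) B) _

lemma tower_natCast (C l : ℕ) : tower C l = ((C ^ ·)^[l] 1 : ℕ) := by
  induction l with
  | zero => simp [tower]
  | succ l ih =>
    rw [tower, ih, Function.iterate_succ_apply', Real.rpow_natCast]
    push_cast
    rfl

lemma lt_of_tower_le_of_lt_iterate {C l m n : ℕ} (hC : 2 ≤ C) (hl : tower C l ≤ n)
    (hn : n < (C ^ ·)^[m] 1) : l < m := by
  have hmono := StrictMono.strictMono_iterate_of_lt_map (f := (C ^ ·)) (x := 1)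
    (fun _ _ h => Nat.pow_lt_pow_right hC h) (by simp; omega)
  rw [tower_natCast, Nat.cast_le] at hl
  exact hmono.lt_iff_lt.mp (hl.trans_lt hn)

section PowSum

variable {ι : Type*} [Fintype ι]

def powSum (y : ι → ℕ) (n : ℕ) : ℕ := ∑ i, y i ^ n

variable (y : ι → ℕ)

lemma le_powSum_one (i : ι) : y i ≤ powSum y 1 := by
  simpa [powSum] using single_le_sum (f := y) (fun j _ => Nat.zero_le _) (mem_univ i)

lemma powSum_le_pow {n : ℕ} (hn : n ≠ 0) : powSum y n ≤ powSum y 1 ^ n := by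
  obtain ⟨n, rfl⟩ := Nat.exists_eq_succ_of_ne_zero hn
  calc powSum y (n + 1) = ∑ i, y i * y i ^ n := by simp only [powSum, pow_succ']
    _ ≤ ∑ i, y i * powSum y 1 ^ n := by gcongr with i; exact le_powSum_one y i
    _ = powSum y 1 ^ (n + 1) := by rw [← sum_mul, pow_succ']; simp [powSum]

lemma powSum_add_modEq {p J a d : ℕ} (hp : p.Prime) (hd : φ (p ^ J) ∣ d)
    (ha : (∃ i, p ∣ y i) → J ≤ a) : powSum y (a + d) ≡ powSum y a [MOD p ^ J] :=
  Nat.ModEq.sum fun i _ => pow_add_modEq_pow hp hd fun h => ha ⟨i, h⟩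

lemma powSum_modEq_card {p J n : ℕ} (hp : p.Prime) (hJ : J ≤ n) (hd : φ (p ^ J) ∣ n) :
    powSum y n ≡ #{i | ¬ p ∣ y i} [MOD p ^ J] := by
  calc powSum y n ≡ ∑ i, if p ∣ y i then 0 else 1 [MOD p ^ J] :=
        Nat.ModEq.sum fun i _ => pow_modEq_ite hp hJ hd
    _ = #{i | ¬ p ∣ y i} := by
      rw [card_filter]
      simp only [ite_not]

lemma factorization_powSum_lt {p n : ℕ} (hp : p.Prime) (hcop : ∃ i, ¬ p ∣ y i)
    (hn : Fintype.card ι ≤ n) (hd : φ (p ^ Fintype.card ι) ∣ n) :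
    (powSum y n).factorization p < Fintype.card ι := by
  obtain ⟨i, hi⟩ := hcop
  have hpos : 0 < #{i | ¬ p ∣ y i} := card_pos.mpr ⟨i, mem_filter.mpr ⟨mem_univ i, hi⟩⟩
  have hlt : #{i | ¬ p ∣ y i} < p ^ Fintype.card ι :=
    (card_le_univ _).trans_lt (Nat.lt_two_pow_self.trans_le (Nat.pow_le_pow_left hp.two_le _))
  by_contra! hle
  have hdvd : p ^ Fintype.card ι ∣ powSum y n := (pow_dvd_pow p hle).trans (Nat.ordProj_dvd _ p)
  have := (Nat.ModEq.dvd_iff (powSum_modEq_card y hp hn hd) dvd_rfl).mp hdvd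
  exact absurd (Nat.le_of_dvd hpos this) (by omega)

variable {y}

lemma powSum_pos [Nonempty ι] (hy : ∀ i, 0 < y i) (n : ℕ) : 0 < powSum y n :=
  sum_pos (fun i _ => pow_pos (hy i) n) univ_nonempty

lemma powSum_strictMono (hy : ∀ i, 0 < y i) (h2 : ∃ i, 2 ≤ y i) : StrictMono (powSum y) := by
  obtain ⟨j, hj⟩ := h2
  intro m n hmn
  exact sum_lt_sum (fun i _ => Nat.pow_le_pow_right (hy i) hmn.le)
    ⟨j, mem_univ j, Nat.pow_lt_pow_right hj hmn⟩

end PowSum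

section Progression

variable {ι : Type*} [Fintype ι] {y : ι → ℕ}

structure Admissible (y : ι → ℕ) (a q : ℕ) (F : Finset ℕ) : Prop where
  a_pos : 0 < a
  q_pos : 0 < q
  prime : ∀ p ∈ F, p.Prime
  dvd_powSum : ∀ p ∈ F, ∀ t, p ∣ powSum y (a + t * q)
  factorization_lt : ∀ t, ∀ p, p.Prime → (∃ i, p ∣ y i) →
    (powSum y (a + t * q)).factorization p < a + t * q

lemma exists_admissible_empty [Nonempty ι] (hy : ∀ i, 0 < y i) (hgcd : univ.gcd y = 1) :
    ∃ a q, Admissible y a q ∅ := by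
  set Q := φ ((∏ i, y i) ^ Fintype.card ι)
  have hQ : 0 < Q := Nat.totient_pos.mpr (pow_pos (prod_pos fun i _ => hy i) _)
  have hk : 0 < Fintype.card ι := Fintype.card_pos
  refine ⟨Fintype.card ι * Q, Q, ⟨Nat.mul_pos hk hQ, hQ, by simp, by simp, ?_⟩⟩
  intro t p hp ⟨i, hpi⟩
  have hcop : ∃ j, ¬ p ∣ y j := by
    by_contra! h
    exact hp.not_dvd_one (hgcd ▸ dvd_gcd fun j _ => h j)
  have hkn : Fintype.card ι ≤ Fintype.card ι * Q + t * Q :=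
    (Nat.le_mul_of_pos_right _ hQ).trans (Nat.le_add_right _ _)
  have hpQ : φ (p ^ Fintype.card ι) ∣ Q :=
    Nat.totient_dvd_of_dvd (pow_dvd_pow_of_dvd (hpi.trans (dvd_prod_of_mem y (mem_univ i))) _)
  have hdvd : φ (p ^ Fintype.card ι) ∣ Fintype.card ι * Q + t * Q :=
    hpQ.trans (Dvd.intro_left _ (add_mul _ _ _))
  exact (factorization_powSum_lt y hp hcop hkn hdvd).trans_le hkn

namespace Admissible

variable {a q : ℕ} {F : Finset ℕ}

lemma prod_pos (h : Admissible y a q F) : 0 < ∏ p ∈ F, p :=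
  Finset.prod_pos fun p hp => (h.prime p hp).pos

lemma mono (h : Admissible y a q F) {a' q' : ℕ} (ha' : 0 < a') (hq' : 0 < q')
    (hsub : ∀ t, ∃ s, a' + t * q' = a + s * q) : Admissible y a' q' F where
  a_pos := ha'
  q_pos := hq'
  prime := h.prime
  dvd_powSum p hp t := by
    obtain ⟨s, hs⟩ := hsub t
    exact hs ▸ h.dvd_powSum p hp s
  factorization_lt t := by
    obtain ⟨s, hs⟩ := hsub t
    exact hs ▸ h.factorization_lt s

lemma insert_of_dvd (h : Admissible y a q F) {p : ℕ} (hp : p.Prime) (hpa : p ∣ powSum y a) :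
    Admissible y a (q * φ p) (insert p F) := by
  have h' := h.mono (a' := a) (q' := q * φ p) h.a_pos
    (Nat.mul_pos h.q_pos (Nat.totient_pos.mpr hp.pos)) fun t => ⟨t * φ p, by ring⟩
  refine { h' with prime := forall_mem_insert _ _ _ |>.mpr ⟨hp, h.prime⟩,
                   dvd_powSum := forall_mem_insert _ _ _ |>.mpr ⟨fun t => ?_, h'.dvd_powSum⟩ }
  have hcong := powSum_add_modEq y hp (J := 1) (a := a) (d := t * (q * φ p))
    (by rw [pow_one]; exact dvd_mul_of_dvd_right (dvd_mul_left _ _) t) fun _ => h.a_pos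
  rw [pow_one] at hcong
  exact (hcong.dvd_iff dvd_rfl).mpr hpa

lemma totient_powSum_mul_prod_pos [Nonempty ι] (h : Admissible y a q F) (hy : ∀ i, 0 < y i) :
    0 < φ (powSum y a * ∏ p ∈ F, p) :=
  Nat.totient_pos.mpr (Nat.mul_pos (powSum_pos hy a) h.prod_pos)

lemma exists_mem_primeFactors_notMem [Nonempty ι] (h : Admissible y a q F)
    (hy : ∀ i, 0 < y i) (h2 : ∃ i, 2 ≤ y i) :
    ∃ p ∈ (powSum y (a + φ (powSum y a * ∏ p ∈ F, p) * q)).primeFactors, p ∉ F := by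
  have hc := h.totient_powSum_mul_prod_pos hy
  refine Nat.exists_mem_primeFactors_notMem_of_lt (powSum_pos hy a).ne'
    (powSum_strictMono hy h2 (Nat.lt_add_of_pos_right (Nat.mul_pos hc h.q_pos))) fun p hp => ?_
  refine Nat.factorization_le_of_modEq (h.prime p hp) (powSum_pos hy a).ne'
    (powSum_add_modEq y (h.prime p hp) ?_ fun hpy => ?_)
  · refine (Nat.totient_dvd_of_dvd ?_).mul_right q
    rw [pow_succ]
    exact mul_dvd_mul (Nat.ordProj_dvd _ p) (dvd_prod_of_mem _ hp)
  · simpa using h.factorization_lt 0 p (h.prime p hp) hpy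

lemma exists_insert [Nonempty ι] (h : Admissible y a q F) (hy : ∀ i, 0 < y i)
    (h2 : ∃ i, 2 ≤ y i) :
    ∃ a' q' p, p ∉ F ∧ Admissible y a' q' (insert p F) ∧ a < a' ∧
      q' * (∏ r ∈ insert p F, r) * powSum y 1 ^ a' ≤
        (powSum y 1 ^ 7) ^ (q * (∏ r ∈ F, r) * powSum y 1 ^ a) := by
  obtain ⟨p, hpS, hpF⟩ := h.exists_mem_primeFactors_notMem hy h2
  set c := φ (powSum y a * ∏ p ∈ F, p)
  have hp := Nat.prime_of_mem_primeFactors hpS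
  have hc : 0 < c := h.totient_powSum_mul_prod_pos hy
  have hE : 2 ≤ powSum y 1 := let ⟨i, hi⟩ := h2; hi.trans (le_powSum_one y i)
  have hshift := h.mono (a' := a + c * q) (q' := q) (Nat.add_pos_left h.a_pos _) h.q_pos
    fun t => ⟨c + t, by ring⟩
  refine ⟨a + c * q, q * φ p, p, hpF, hshift.insert_of_dvd hp (Nat.dvd_of_mem_primeFactors hpS),
    Nat.lt_add_of_pos_right (Nat.mul_pos hc h.q_pos), ?_⟩
  have hc_le : c ≤ powSum y 1 ^ a * ∏ r ∈ F, r :=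
    (Nat.totient_le _).trans (Nat.mul_le_mul_right _ (powSum_le_pow y h.a_pos.ne'))
  have hp_le : p ≤ powSum y 1 ^ (a + c * q) :=
    (Nat.le_of_mem_primeFactors hpS).trans (powSum_le_pow y (by have := h.a_pos; omega))
  rw [prod_insert hpF]
  calc q * φ p * (p * ∏ r ∈ F, r) * powSum y 1 ^ (a + c * q)
      ≤ q * p * (p * ∏ r ∈ F, r) * powSum y 1 ^ (a + c * q) := by
        gcongr
        exact Nat.totient_le p
    _ ≤ _ := mul_pow_le_pow_pow hE h.q_pos h.prod_pos
        (by rw [mul_assoc, mul_comm q]; gcongr) hp_le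

end Admissible

lemma exists_admissible_card_eq [Nonempty ι] (hy : ∀ i, 0 < y i) (hgcd : univ.gcd y = 1)
    (h2 : ∃ i, 2 ≤ y i) :
    ∃ b, ∀ L, ∃ a q F, Admissible y a q F ∧ F.card = L ∧ L < a ∧
      q * (∏ p ∈ F, p) * powSum y 1 ^ a ≤ ((powSum y 1 ^ 7) ^ ·)^[L] b := by
  obtain ⟨a₀, q₀, h₀⟩ := exists_admissible_empty hy hgcd
  refine ⟨q₀ * (∏ p ∈ ∅, p) * powSum y 1 ^ a₀, fun L => ?_⟩
  induction L with
  | zero => exact ⟨a₀, q₀, ∅, h₀, rfl, h₀.a_pos, le_rfl⟩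
  | succ L ih =>
    obtain ⟨a, q, F, h, hcard, hLa, hb⟩ := ih
    obtain ⟨a', q', p, hpF, h', haa', hb'⟩ := h.exists_insert hy h2
    refine ⟨a', q', insert p F, h', by rw [card_insert_of_notMem hpF, hcard], by omega, ?_⟩
    rw [Function.iterate_succ_apply']
    exact hb'.trans (Nat.pow_le_pow_right (pow_pos (powSum_pos hy 1) 7) hb)

theorem exists_lt_iterate_pow_lt_card_primeFactors [Nonempty ι] (hy : ∀ i, 0 < y i)
    (hgcd : univ.gcd y = 1) (h2 : ∃ i, 2 ≤ y i) :
    ∃ C, 2 ≤ C ∧ ∀ L, ∃ n, L < n ∧ n < (C ^ ·)^[L + 1] 1 ∧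
      L < (powSum y n).primeFactors.card := by
  have hE : 2 ≤ powSum y 1 := let ⟨i, hi⟩ := h2; hi.trans (le_powSum_one y i)
  have hB : 2 ≤ powSum y 1 ^ 7 := hE.trans (Nat.le_self_pow (by norm_num) _)
  obtain ⟨b, hchain⟩ := exists_admissible_card_eq hy hgcd h2
  refine ⟨(powSum y 1 ^ 7) ^ (b + 1), hB.trans (Nat.le_self_pow (Nat.succ_ne_zero b) _),
    fun L => ?_⟩
  obtain ⟨a, q, F, h, hcard, hLa, hb⟩ := hchain (L + 1)
  have hF : F ⊆ (powSum y a).primeFactors := fun p hp =>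
    Nat.mem_primeFactors.mpr
      ⟨h.prime p hp, by simpa using h.dvd_powSum p hp 0, (powSum_pos hy a).ne'⟩
  refine ⟨a, by omega, ?_, by have := card_le_card hF; omega⟩
  calc a < powSum y 1 ^ a := Nat.lt_pow_self hE
    _ ≤ q * (∏ p ∈ F, p) * powSum y 1 ^ a :=
      Nat.le_mul_of_pos_left _ (Nat.mul_pos h.q_pos h.prod_pos)
    _ ≤ _ := hb
    _ < _ := iterate_pow_lt_iterate_pow hB b L

lemma primeFactors_powSum_subset [Nonempty ι] {x : ι → ℕ} {g : ℕ} (hx : ∀ i, 0 < x i)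
    (hxy : ∀ i, x i = g * y i) (n : ℕ) :
    (powSum y n).primeFactors ⊆ (powSum x n).primeFactors := by
  have hsum : powSum x n = g ^ n * powSum y n := by
    simp_rw [powSum, mul_sum, ← mul_pow, ← hxy]
  exact Nat.primeFactors_mono (Dvd.intro_left _ hsum.symm) (powSum_pos hx n).ne'

end Progression

/-- If `x₁,…,x_k` are positive integers, not all equal, then
there is `C > 1` with `ω(x₁^n + ⋯ + x_k^n) > slog_C(n)` for infinitely many
`n`; i.e. every `l` with `C↑↑l ≤ n` satisfies `l < ω(x₁^n + ⋯ + x_k^n)`. -/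
theorem omega_sum_pow_gt_slog (k : ℕ) (x : Fin k → ℕ)
    (hx : ∀ i, 0 < x i) (hne : ¬∀ i j, x i = x j) :
    ∃ C : ℝ, 1 < C ∧ ∀ N : ℕ, ∃ n : ℕ, N ≤ n ∧ 1 ≤ n ∧
      ∀ l : ℕ, tower C l ≤ (n : ℝ) →
        l < (∑ i, x i ^ n).primeFactors.card := by
  have : Nonempty (Fin k) := by
    by_contra! h
    exact hne fun i => h.elim i
  obtain ⟨y, hxy, hgcd⟩ := extract_gcd x univ_nonempty
  replace hxy : ∀ i, x i = univ.gcd x * y i := fun i => hxy i (mem_univ i)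
  have hy : ∀ i, 0 < y i := fun i => Nat.pos_of_mul_pos_left (hxy i ▸ hx i)
  have h2 : ∃ i, 2 ≤ y i := by
    by_contra! h
    have h1 : ∀ i, y i = 1 := fun i => by have := hy i; have := h i; omega
    exact hne fun i j => by rw [hxy i, hxy j, h1 i, h1 j]
  obtain ⟨C, hC, hCn⟩ := exists_lt_iterate_pow_lt_card_primeFactors hy hgcd h2
  refine ⟨C, by exact_mod_cast hC, fun N => ?_⟩
  obtain ⟨n, hNn, hnC, hω⟩ := hCn N
  refine ⟨n, hNn.le, by omega, fun l hl => ?_⟩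
  have hlN : l < N + 1 := lt_of_tower_le_of_lt_iterate hC hl hnC
  have hω' : _ ≤ (∑ i, x i ^ n).primeFactors.card :=
    card_le_card (primeFactors_powSum_subset hx hxy n)
  omega
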